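/- Weighted projective Nullstellensatz: if I is a weighted-homogeneous relevant ideal of k_a[x_0,...,x_n] over an algebraically closed field k (i.e. I is strictly contained in the irrelevant ideal and V(I) ≠ ∅), then I(V(I)) = √I. -/

import Mathlib

open MvPolynomial

/-- The scaling equivalence on `𝔸^{n+1} ∖ {0}` defining weighted projective space:
`y ~ x` iff `y i = λ ^ (a i) * x i` for some unit `λ`. -/
def wpsRel {k : Type*} [Field k] {n : ℕ} (a : Fin (n + 1) → ℕ)
    (x y : {v : Fin (n + 1) → k // v ≠ 0}) : Prop :=
  ∃ l : kˣ, ∀ i, y.1 i = (l : k) ^ a i * x.1 i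

/-- Weighted projective space `ℙ(a_0, …, a_n)` as the quotient of
`𝔸^{n+1} ∖ {0}` by the weighted scaling action. -/
def WPS (k : Type*) [Field k] {n : ℕ} (a : Fin (n + 1) → ℕ) :=
  Quot (wpsRel (k := k) a)

/-- The vanishing locus in weighted projective space of an ideal. -/
def zeroLocus {k : Type*} [Field k] {n : ℕ} (a : Fin (n + 1) → ℕ)
    (I : Ideal (MvPolynomial (Fin (n + 1)) k)) : Set (WPS k a) :=
  {p | ∀ x : {v : Fin (n + 1) → k // v ≠ 0},
    Quot.mk (wpsRel a) x = p → ∀ f ∈ I, eval x.1 f = 0}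

/-- An ideal of the weighted polynomial ring is weighted-homogeneous if it can be
generated by weighted-homogeneous polynomials. -/
def IsWeightedHomogeneousIdeal {k : Type*} [Field k] {n : ℕ} (a : Fin (n + 1) → ℕ)
    (I : Ideal (MvPolynomial (Fin (n + 1)) k)) : Prop :=
  ∃ S : Set (MvPolynomial (Fin (n + 1)) k),
    (∀ g ∈ S, ∃ d : ℕ, g.IsWeightedHomogeneous a d) ∧ I = Ideal.span S

/-- The set of weighted-homogeneous polynomials vanishing at every point of a
subset `V` of weighted projective space. -/
def vanishingSet {k : Type*} [Field k] {n : ℕ} (a : Fin (n + 1) → ℕ)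
    (V : Set (WPS k a)) : Set (MvPolynomial (Fin (n + 1)) k) :=
  {f | (∃ d : ℕ, f.IsWeightedHomogeneous a d) ∧
    ∀ x : {v : Fin (n + 1) → k // v ≠ 0},
      Quot.mk (wpsRel a) x ∈ V → eval x.1 f = 0}

/-!
The affine Nullstellensatz identifies `√I` with the polynomials vanishing on the affine zero set
`Z(I) ⊆ 𝔸^{n+1}`. Since `I` is generated by weighted-homogeneous polynomials, `Z(I) ∖ {0}` is a
union of weighted orbits, i.e. the cone over the projective zero locus, so a weighted-homogeneous
polynomial vanishing on the projective zero locus vanishes on `Z(I) ∖ {0}`. It also vanishes at the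
origin: with positive weights it is either constant or has no constant term, and a constant
vanishing at a point of the (nonempty) locus is zero. Conversely, `√I` is again a homogeneous
ideal, so it is spanned by its weighted-homogeneous components, each of which vanishes on the locus.
-/

namespace MvPolynomial.IsWeightedHomogeneous

variable {σ R : Type*} [CommSemiring R] {w : σ → ℕ} {f : MvPolynomial σ R} {d : ℕ}

theorem eval_pow_weight_mul (hf : f.IsWeightedHomogeneous w d) (l : R) (x : σ → R) :
    eval (fun i => l ^ w i * x i) f = l ^ d * eval x f := by
  induction hf using IsWeightedHomogeneous.induction_on with
  | zero => simp
  | add p q _ _ hp hq => simp [hp, hq, mul_add]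
  | monomial m r hm =>
    have hl : (m.prod fun i e => (l ^ w i) ^ e) = l ^ d := by
      simp only [← hm, Finsupp.weight_apply, Finsupp.prod, Finsupp.sum,
        Finset.prod_pow_eq_pow_sum, ← pow_mul, smul_eq_mul, mul_comm]
    simp only [eval_monomial, mul_pow, Finsupp.prod_mul, hl]
    ring

theorem constantCoeff_eq_zero (hf : f.IsWeightedHomogeneous w d) (hd : d ≠ 0) :
    constantCoeff f = 0 := by
  rw [constantCoeff_eq]
  exact hf.coeff_eq_zero 0 (by simpa using hd.symm)

theorem eq_C_coeff_zero (hw : ∀ i, w i ≠ 0) (hf : f.IsWeightedHomogeneous w 0) :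
    f = C (coeff 0 f) := by
  rw [← weightedHomogeneousComponent_zero f hw, weightedHomogeneousComponent_eq_self hf]

theorem eval_zero_eq_zero (hw : ∀ i, w i ≠ 0) (hf : f.IsWeightedHomogeneous w d) {x : σ → R}
    (hx : eval x f = 0) : eval 0 f = 0 := by
  rcases eq_or_ne d 0 with rfl | hd
  · rwa [hf.eq_C_coeff_zero hw, eval_C] at hx ⊢
  · rw [eval_zero]
    exact hf.constantCoeff_eq_zero hd

end MvPolynomial.IsWeightedHomogeneous

attribute [local instance] weightedGradedAlgebra

section

variable {k : Type*} [Field k] {n : ℕ} {a : Fin (n + 1) → ℕ}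
  {I : Ideal (MvPolynomial (Fin (n + 1)) k)}

lemma wpsRel_equivalence (a : Fin (n + 1) → ℕ) : Equivalence (wpsRel (k := k) a) where
  refl _ := ⟨1, by simp⟩
  symm := by
    rintro x y ⟨l, hl⟩
    exact ⟨l⁻¹, fun i => by rw [hl i, ← mul_assoc, ← mul_pow]; simp⟩
  trans := by
    rintro x y z ⟨l, hl⟩ ⟨m, hm⟩
    exact ⟨m * l, fun i => by rw [hm i, hl i, Units.val_mul, mul_pow]; ring⟩

namespace IsWeightedHomogeneousIdeal

lemma isHomogeneous (hI : IsWeightedHomogeneousIdeal a I) :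
    I.IsHomogeneous (weightedHomogeneousSubmodule k a) := by
  obtain ⟨S, hS, rfl⟩ := hI
  exact Ideal.homogeneous_span _ _ fun g hg =>
    (hS g hg).imp fun d hd => (mem_weightedHomogeneousSubmodule _ _ _ _).mpr hd

lemma eval_pow_weight_mul_eq_zero (hI : IsWeightedHomogeneousIdeal a I) {x : Fin (n + 1) → k}
    (hx : ∀ f ∈ I, eval x f = 0) (l : k) : ∀ f ∈ I, eval (fun i => l ^ a i * x i) f = 0 := by
  obtain ⟨S, hS, rfl⟩ := hI
  suffices Ideal.span S ≤ RingHom.ker (eval fun i => l ^ a i * x i) from fun f hf => this hf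
  refine Ideal.span_le.mpr fun g hg => ?_
  obtain ⟨d, hd⟩ := hS g hg
  rw [SetLike.mem_coe, RingHom.mem_ker, hd.eval_pow_weight_mul, hx g (Ideal.subset_span hg),
    mul_zero]

lemma mk_mem_zeroLocus_iff (hI : IsWeightedHomogeneousIdeal a I)
    (x : {v : Fin (n + 1) → k // v ≠ 0}) :
    Quot.mk (wpsRel a) x ∈ zeroLocus a I ↔ ∀ f ∈ I, eval x.1 f = 0 := by
  refine ⟨fun h => h x rfl, fun hx y hy => ?_⟩
  obtain ⟨l, hl⟩ := (wpsRel_equivalence a).symm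
    ((wpsRel_equivalence a).eqvGen_iff.mp (Quot.eqvGen_exact hy))
  rw [funext hl]
  exact hI.eval_pow_weight_mul_eq_zero hx l

end IsWeightedHomogeneousIdeal

lemma mem_vanishingSet_of_mem_radical {f : MvPolynomial (Fin (n + 1)) k} {d : ℕ}
    (hf : f.IsWeightedHomogeneous a d) (hfI : f ∈ I.radical) :
    f ∈ vanishingSet a (zeroLocus a I) := by
  refine ⟨⟨d, hf⟩, fun x hx => ?_⟩
  obtain ⟨m, hm⟩ := hfI
  exact eq_zero_of_pow_eq_zero (by simpa only [map_pow] using hx x rfl _ hm)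

lemma isHomogeneous_span_vanishingSet (V : Set (WPS k a)) :
    (Ideal.span (vanishingSet a V)).IsHomogeneous (weightedHomogeneousSubmodule k a) :=
  Ideal.homogeneous_span _ _ fun _ hf =>
    hf.1.imp fun _ hd => (mem_weightedHomogeneousSubmodule _ _ _ _).mpr hd

lemma mem_radical_of_mem_vanishingSet [IsAlgClosed k] (ha : ∀ i, 0 < a i)
    (hI : IsWeightedHomogeneousIdeal a I) (hne : (zeroLocus a I).Nonempty)
    {f : MvPolynomial (Fin (n + 1)) k} (hf : f ∈ vanishingSet a (zeroLocus a I)) :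
    f ∈ I.radical := by
  obtain ⟨⟨d, hfd⟩, hvan⟩ := hf
  rw [← vanishingIdeal_zeroLocus_eq_radical (K := k), mem_vanishingIdeal_iff]
  intro x hx
  by_cases hx0 : x = 0
  · obtain ⟨p, hp⟩ := hne
    obtain ⟨x₀, rfl⟩ := Quot.exists_rep p
    rw [hx0]
    exact hfd.eval_zero_eq_zero (fun i => (ha i).ne') (hvan x₀ hp)
  · exact hvan ⟨x, hx0⟩ ((hI.mk_mem_zeroLocus_iff _).mpr (mem_zeroLocus_iff.mp hx))

lemma radical_le_span_vanishingSet (hI : IsWeightedHomogeneousIdeal a I) :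
    I.radical ≤ Ideal.span (vanishingSet a (zeroLocus a I)) := fun f hf =>
  (mem_iff_weightedHomogeneousComponent_mem k a (isHomogeneous_span_vanishingSet _) f).mpr
    fun d => Ideal.subset_span <|
      mem_vanishingSet_of_mem_radical (weightedHomogeneousComponent_isWeightedHomogeneous d f)
        (weightedHomogeneousComponent_mem_of_mem k a hI.isHomogeneous.radical hf d)

end

theorem weighted_projective_nullstellensatz_general
    {k : Type*} [Field k] [IsAlgClosed k] {n : ℕ}
    (a : Fin (n + 1) → ℕ) (ha : ∀ i, 0 < a i)
    (I : Ideal (MvPolynomial (Fin (n + 1)) k))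
    (hI : IsWeightedHomogeneousIdeal a I)
    (hne : zeroLocus a I ≠ ∅) :
    Ideal.span (vanishingSet a (zeroLocus a I)) = I.radical :=
  le_antisymm
    (Ideal.span_le.mpr fun _ hf =>
      mem_radical_of_mem_vanishingSet ha hI (Set.nonempty_iff_ne_empty.mpr hne) hf)
    (radical_le_span_vanishingSet hI)

theorem weighted_projective_nullstellensatz
    {k : Type*} [Field k] [IsAlgClosed k] {n : ℕ}
    (a : Fin (n + 1) → ℕ) (ha : ∀ i, 0 < a i)
    (I : Ideal (MvPolynomial (Fin (n + 1)) k))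
    (hI : IsWeightedHomogeneousIdeal a I)
    (hrel : I < Ideal.span (Set.range (X : Fin (n + 1) → MvPolynomial (Fin (n + 1)) k)))
    (hne : zeroLocus a I ≠ ∅) :
    Ideal.span (vanishingSet a (zeroLocus a I)) = I.radical :=
  weighted_projective_nullstellensatz_general a ha I hI hne
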